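/- Every word of the form a^m b^n with m, n ≥ 2 and distinct letters a, b is an ins-robust primitive word. -/
import Mathlib

/-- `wpow v n` is the word `v` repeated `n` times. -/
def wpow {V : Type*} (v : List V) : ℕ → List V
  | 0 => []
  | n + 1 => v ++ wpow v n

/-- A word is primitive if it is nonempty and not a proper power. -/
def Primitive {V : Type*} (w : List V) : Prop :=
  w ≠ [] ∧ ∀ (v : List V) (n : ℕ), w = wpow v n → n = 1

/-- A word is ins-robust if it is primitive and inserting any letter at any
position yields a primitive word. -/
def InsRobust {V : Type*} (w : List V) : Prop :=
  Primitive w ∧ ∀ (x y : List V) (a : V), w = x ++ y → Primitive (x ++ a :: y)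

/-- `HasPeriod w p` : the word `w` is periodic with period `p`. -/
def HasPeriod {V : Type*} (w : List V) (p : ℕ) : Prop :=
  ∀ i, i + p < w.length → w[i]? = w[i + p]?

namespace Aux

variable {V : Type*}

lemma wpow_nil (k : ℕ) : wpow ([] : List V) k = [] := by
  induction k with
  | zero => rfl
  | succ k ih => simpa [wpow] using ih

lemma wpow_length (v : List V) (k : ℕ) : (wpow v k).length = k * v.length := by
  induction k with
  | zero => simp [wpow]
  | succ k ih => simp [wpow, ih, Nat.succ_mul]; ring

lemma wpow_succ' (v : List V) (k : ℕ) : wpow v (k + 1) = wpow v k ++ v := by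
  induction k with
  | zero => simp [wpow]
  | succ k ih =>
    show v ++ wpow v (k + 1) = (v ++ wpow v k) ++ v
    rw [ih, List.append_assoc]

lemma wpow_reverse (v : List V) (k : ℕ) : (wpow v k).reverse = wpow v.reverse k := by
  induction k with
  | zero => rfl
  | succ k ih =>
    show (v ++ wpow v k).reverse = _
    rw [List.reverse_append, ih, ← wpow_succ']

lemma wpow_getElem? (v : List V) (k : ℕ) :
    ∀ i, i < k * v.length → (wpow v k)[i]? = v[i % v.length]? := by
  induction k with
  | zero => intro i h; omega
  | succ k ih =>
    intro i h
    show (v ++ wpow v k)[i]? = _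
    rcases Nat.lt_or_ge i v.length with hi | hi
    · rw [List.getElem?_append_left hi, Nat.mod_eq_of_lt hi]
    · rw [List.getElem?_append_right hi, ih (i - v.length) (by
        have : (k+1) * v.length = k * v.length + v.length := Nat.succ_mul _ _
        omega), Nat.mod_eq_sub_mod hi]

lemma wpow_hasPeriod (v : List V) (k : ℕ) : HasPeriod (wpow v k) v.length := by
  intro i h
  rw [wpow_length] at h
  rw [wpow_getElem? v k i (by omega), wpow_getElem? v k _ h, Nat.add_mod_right]

lemma primitive_of_noPeriod (w : List V) (hw : w ≠ [])
    (h : ∀ p, 1 ≤ p → 2 * p ≤ w.length → HasPeriod w p → False) : Primitive w := by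
  refine ⟨hw, fun v k hk => ?_⟩
  match k with
  | 0 => exact absurd hk hw
  | 1 => rfl
  | (k + 2) =>
    exfalso
    have hv : v ≠ [] := by
      rintro rfl
      exact hw (hk.trans (wpow_nil _))
    have hv1 : 1 ≤ v.length := List.length_pos_iff.mpr hv
    refine h v.length hv1 ?_ (hk ▸ wpow_hasPeriod v (k + 2))
    rw [hk, wpow_length]
    nlinarith

lemma primitive_reverse (w : List V) (h : Primitive w.reverse) : Primitive w := by
  refine ⟨fun hw => h.1 (by simp [hw]), fun v k hk => ?_⟩
  exact h.2 v.reverse k (by rw [hk, wpow_reverse])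

lemma count_wpow [DecidableEq V] (c : V) (v : List V) (k : ℕ) :
    (wpow v k).count c = k * v.count c := by
  induction k with
  | zero => simp [wpow]
  | succ k ih => simp [wpow, ih, Nat.succ_mul]; ring

lemma primitive_of_count_one [DecidableEq V] (w : List V) (c : V)
    (h : w.count c = 1) : Primitive w := by
  refine ⟨fun hw => by simp [hw] at h, fun v k hk => ?_⟩
  rw [hk, count_wpow] at h
  exact Nat.dvd_one.mp ⟨_, h.symm⟩

/-- getElem? of two-block word. -/
lemma get_two (x y : V) (s t i : ℕ) :
    (List.replicate s x ++ List.replicate t y)[i]? =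
      if i < s then some x else if i < s + t then some y else none := by
  rcases Nat.lt_or_ge i s with h | h
  · rw [List.getElem?_append_left (by simpa using h), if_pos h]
    simp [List.getElem?_replicate, h]
  · rw [List.getElem?_append_right (by simpa using h), if_neg (by omega)]
    simp only [List.length_replicate, List.getElem?_replicate]
    split_ifs <;> first | rfl | omega

/-- No short period for `x^s y^t` with `s, t ≥ 1`. -/
lemma shape1 (x y : V) (hxy : x ≠ y) (s t : ℕ) (hs : 1 ≤ s) (ht : 1 ≤ t)
    (p : ℕ) (hp : 1 ≤ p) (h2 : 2 * p ≤ s + t)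
    (hper : HasPeriod (List.replicate s x ++ List.replicate t y) p) : False := by
  have hlen : (List.replicate s x ++ List.replicate t y).length = s + t := by simp
  have h0 := hper 0 (by omega)
  rw [get_two, get_two] at h0
  have hps : p < s := by
    by_contra hc
    rw [if_pos (by omega), if_neg (by omega), if_pos (by omega)] at h0
    exact hxy (by simpa using h0)
  have h1 := hper (s - p) (by omega)
  rw [get_two, get_two, if_pos (by omega), if_neg (by omega), if_pos (by omega)] at h1
  exact hxy (by simpa using h1)

/-- The shape `x^M y^P x y^Q`. -/
def W2 (x y : V) (M P Q : ℕ) : List V :=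
  List.replicate M x ++ List.replicate P y ++ x :: List.replicate Q y

lemma W2_length (x y : V) (M P Q : ℕ) : (W2 x y M P Q).length = M + P + 1 + Q := by
  simp [W2]; omega

lemma get_W2 (x y : V) (M P Q i : ℕ) :
    (W2 x y M P Q)[i]? =
      if i < M then some x else if i < M + P then some y
      else if i = M + P then some x
      else if i < M + P + 1 + Q then some y else none := by
  rw [W2, List.append_assoc]
  rcases Nat.lt_or_ge i M with h | h
  · rw [List.getElem?_append_left (by simpa using h), if_pos h]
    simp [List.getElem?_replicate, h]
  · rw [List.getElem?_append_right (by simpa using h), if_neg (by omega)]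
    rcases Nat.lt_or_ge i (M + P) with h' | h'
    · rw [List.getElem?_append_left (by simp; omega), if_pos h']
      simp only [List.length_replicate, List.getElem?_replicate]
      rw [if_pos (by omega)]
    · rw [List.getElem?_append_right (by simp; omega), if_neg (by omega)]
      simp only [List.length_replicate, List.getElem?_cons]
      rcases Nat.eq_or_lt_of_le h' with he | hl
      · rw [if_pos (by omega), if_pos (by omega)]
      · rw [if_neg (by omega), if_neg (by omega)]
        simp only [List.getElem?_replicate]
        split_ifs <;> first | rfl | omega

/-- No short period for `x^M y^P x y^Q` with `M ≥ 2`, `P ≥ 1`. -/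
lemma shape2 (x y : V) (hxy : x ≠ y) (M P Q : ℕ) (hM : 2 ≤ M) (hP : 1 ≤ P)
    (p : ℕ) (hp : 1 ≤ p) (h2 : 2 * p ≤ M + P + 1 + Q)
    (hper : HasPeriod (W2 x y M P Q) p) : False := by
  have hlen := W2_length x y M P Q
  have h0 := hper 0 (by omega)
  rw [get_W2, get_W2, if_pos (by omega)] at h0
  simp only [Nat.zero_add] at h0
  have key : p < M ∨ p = M + P := by
    by_contra hc
    push_neg at hc
    rw [if_neg (by omega)] at h0
    by_cases hmp : p < M + P
    · rw [if_pos hmp] at h0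
      exact hxy (by simpa using h0)
    · rw [if_neg hmp, if_neg hc.2, if_pos (by omega)] at h0
      exact hxy (by simpa using h0)
  rcases key with hps | hps
  · have h1 := hper (M - p) (by omega)
    rw [get_W2, get_W2, if_pos (by omega), if_neg (by omega), if_pos (by omega)] at h1
    exact hxy (by simpa using h1)
  · have hQ : 1 ≤ Q := by omega
    have h1 := hper 1 (by omega)
    rw [get_W2, get_W2, if_pos (by omega), if_neg (by omega), if_neg (by omega),
      if_neg (by omega), if_pos (by omega)] at h1
    exact hxy (by simpa using h1)

lemma prim1 (x y : V) (hxy : x ≠ y) (s t : ℕ) (hs : 1 ≤ s) (ht : 1 ≤ t) :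
    Primitive (List.replicate s x ++ List.replicate t y) := by
  refine primitive_of_noPeriod _ (by simp; omega) (fun p hp h2 hper => ?_)
  exact shape1 x y hxy s t hs ht p hp (by simpa using h2) hper

lemma prim2 (x y : V) (hxy : x ≠ y) (M P Q : ℕ) (hM : 2 ≤ M) (hP : 1 ≤ P) :
    Primitive (W2 x y M P Q) := by
  refine primitive_of_noPeriod _ ?_ (fun p hp h2 hper => ?_)
  · simp [W2]
  · exact shape2 x y hxy M P Q hM hP p hp (by rw [W2_length] at h2; exact h2) hper

lemma wpow_singleton (c : V) (k : ℕ) : wpow [c] k = List.replicate k c := by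
  induction k with
  | zero => rfl
  | succ k ih => simp [wpow, ih, List.replicate_succ]

lemma replicate_split (c : V) (k : ℕ) (x l : List V) (h : x ++ l = List.replicate k c) :
    x = List.replicate x.length c ∧ l = List.replicate l.length c ∧ x.length + l.length = k := by
  have hx : ∀ b ∈ x, b = c := fun b hb =>
    List.eq_of_mem_replicate (h ▸ List.mem_append_left l hb)
  have hl : ∀ b ∈ l, b = c := fun b hb =>
    List.eq_of_mem_replicate (h ▸ List.mem_append_right x hb)
  refine ⟨List.eq_replicate_length.mpr hx, List.eq_replicate_length.mpr hl, ?_⟩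
  have := congrArg List.length h
  simpa using this

end Aux

open Aux in
theorem stmt18 {V : Type*} (a b : V) (hab : a ≠ b) (m n : ℕ)
    (hm : 2 ≤ m) (hn : 2 ≤ n) :
    InsRobust (wpow [a] m ++ wpow [b] n) := by
  classical
  rw [wpow_singleton, wpow_singleton]
  constructor
  · exact prim1 a b hab m n (by omega) (by omega)
  · intro x y c hsplit
    rcases List.append_eq_append_iff.mp hsplit with ⟨l, hx, hy⟩ | ⟨l, hx, hy⟩
    · -- x = replicate m a ++ l, replicate n b = l ++ y : insertion in the b-block
      obtain ⟨hl, hyy, hsum⟩ := replicate_split b n l y hy.symm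
      subst hx
      rw [hl, hyy]
      set i := l.length with hi
      set j := y.length with hj
      by_cases hc : c = b
      · subst hc
        have e : (List.replicate m a ++ List.replicate i c) ++ c :: List.replicate j c
            = List.replicate m a ++ List.replicate (i + (j + 1)) c := by
          rw [List.append_assoc, List.replicate_add]
          rfl
        rw [e]
        exact prim1 a c hab m (i + (j+1)) (by omega) (by omega)
      · by_cases hc' : c = a
        · subst hc'
          rcases Nat.eq_zero_or_pos i with hi0 | hi1
          · have e : (List.replicate m c ++ List.replicate i b) ++ c :: List.replicate j b
                = List.replicate (m + 1) c ++ List.replicate j b := by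
              rw [hi0, List.replicate_add]
              simp
            rw [e]
            exact prim1 c b hab (m + 1) j (by omega) (by omega)
          · have e : (List.replicate m c ++ List.replicate i b) ++ c :: List.replicate j b
                = W2 c b m i j := by
              simp [W2]
            rw [e]
            exact prim2 c b hab m i j hm hi1
        · apply primitive_of_count_one _ c
          simp [List.count_append, List.count_cons, List.count_replicate, Ne.symm hc, Ne.symm hc']
    · -- replicate m a = x ++ l, y = l ++ replicate n b : insertion in the a-block
      obtain ⟨hxx, hl, hsum⟩ := replicate_split a m x l hx.symm
      subst hy
      rw [hxx, hl]
      set i := x.length with hi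
      set la := l.length with hla
      by_cases hc : c = a
      · subst hc
        have e : List.replicate i c ++ c :: (List.replicate la c ++ List.replicate n b)
            = List.replicate (i + (la + 1)) c ++ List.replicate n b := by
          rw [List.replicate_add, List.append_assoc]
          rfl
        rw [e]
        exact prim1 c b hab (i + (la+1)) n (by omega) (by omega)
      · by_cases hc' : c = b
        · subst hc'
          rcases Nat.eq_zero_or_pos la with hl0 | hl1
          · have e : List.replicate i a ++ c :: (List.replicate la a ++ List.replicate n c)
                = List.replicate i a ++ List.replicate (n + 1) c := by
              rw [hl0]
              simp [List.replicate_succ]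
            rw [e]
            exact prim1 a c hab i (n + 1) (by omega) (by omega)
          · apply primitive_reverse
            have e : (List.replicate i a ++ c :: (List.replicate la a ++ List.replicate n c)).reverse
                = W2 c a n la i := by
              simp [W2, List.reverse_append, List.reverse_cons, List.reverse_replicate,
                List.append_assoc]
            rw [e]
            exact prim2 c a (Ne.symm hab) n la i hn hl1
        · apply primitive_of_count_one _ c
          simp [List.count_append, List.count_cons, List.count_replicate, Ne.symm hc, Ne.symm hc']
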